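/- With the notation of the noncommutative hyperbolic ball: every a ∈ B⁺ₙ(c,r) satisfies ‖a‖ ≤ ‖Re c‖ + ‖Im c‖·( (r²+2+r√(r²+4))/2 + r·√((r²+2+r√(r²+4))/2) ). -/

import Mathlib

/-- The imaginary part `Im x = (x - x*)/(2i)` of an element of a complex star algebra. -/
noncomputable def imPart {B : Type*} [Ring B] [StarRing B] [Algebra ℂ B] (x : B) : B :=
  ((2 * Complex.I)⁻¹ : ℂ) • (x - star x)

/-- The real part `Re x = (x + x*)/2` of an element of a complex star algebra. -/
noncomputable def rePart {B : Type*} [Ring B] [StarRing B] [Algebra ℂ B] (x : B) : B :=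
  ((2 : ℂ)⁻¹) • (x + star x)

/-- The noncommutative hyperbolic ball `B⁺ₙ(c, r)`: here the C*-algebra `A` plays the role of
`Mₙ(𝒜)` for a von Neumann algebra `𝒜`.  It consists of those `a` with `Im a` positive and
invertible such that `‖(Im a)^{-1/2} (a − c) (Im c)^{-1/2}‖ ≤ r`. -/
noncomputable def ncUpperBall {A : Type*} [CStarAlgebra A] [PartialOrder A]
    [StarOrderedRing A] (c : A) (r : ℝ) : Set A :=
  {a | (0 ≤ imPart a ∧ IsUnit (imPart a)) ∧
    ‖Ring.inverse (CFC.sqrt (imPart a)) * (a - c) * Ring.inverse (CFC.sqrt (imPart c))‖ ≤ r}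

section Aux

variable {B : Type*} [Ring B] [StarRing B] [Algebra ℂ B]

private lemma imPart_sub' (x y : B) : imPart (x - y) = imPart x - imPart y := by
  simp only [imPart, star_sub, ← smul_sub]
  congr 1
  abel

private lemma rePart_sub' (x y : B) : rePart (x - y) = rePart x - rePart y := by
  simp only [rePart, star_sub, ← smul_sub]
  congr 1
  abel

private lemma decomp' (x : B) : x = rePart x + (Complex.I : ℂ) • imPart x := by
  rw [rePart, imPart, smul_smul]
  have h : (Complex.I : ℂ) * (2 * Complex.I)⁻¹ = 2⁻¹ := by
    rw [mul_inv, ← mul_assoc, mul_comm Complex.I, mul_assoc,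
      mul_inv_cancel₀ Complex.I_ne_zero, mul_one]
  rw [h, ← smul_add]
  have h2 : x + star x + (x - star x) = (2 : ℂ) • x := by
    rw [two_smul]; abel
  rw [h2, smul_smul, inv_mul_cancel₀ (two_ne_zero), one_smul]

variable {A : Type*} [NormedRing A] [StarRing A] [NormedAlgebra ℂ A] [NormedStarGroup A]

private lemma norm_imPart_le' (x : A) : ‖imPart x‖ ≤ ‖x‖ := by
  rw [imPart, norm_smul]
  have h : ‖((2 * Complex.I)⁻¹ : ℂ)‖ = 2⁻¹ := by
    simp [norm_inv]
  rw [h]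
  have := norm_sub_le x (star x)
  rw [norm_star] at this
  nlinarith [norm_nonneg (x - star x)]

private lemma norm_rePart_le' (x : A) : ‖rePart x‖ ≤ ‖x‖ := by
  rw [rePart, norm_smul]
  have h : ‖((2 : ℂ)⁻¹ : ℂ)‖ = 2⁻¹ := by simp
  rw [h]
  have := norm_add_le x (star x)
  rw [norm_star] at this
  nlinarith [norm_nonneg (x + star x)]

omit [NormedStarGroup A] in
private lemma norm_le_rePart_add_imPart (x : A) : ‖x‖ ≤ ‖rePart x‖ + ‖imPart x‖ := by
  conv_lhs => rw [decomp' x]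
  refine (norm_add_le _ _).trans ?_
  gcongr
  rw [norm_smul, Complex.norm_I, one_mul]

end Aux

section CStarAux

variable {A : Type*} [CStarAlgebra A] [PartialOrder A] [StarOrderedRing A]

private lemma norm_cfc_sqrt (x : A) (hx : 0 ≤ x) : ‖CFC.sqrt x‖ = Real.sqrt ‖x‖ := by
  have hs : IsSelfAdjoint (CFC.sqrt x) := IsSelfAdjoint.of_nonneg (CFC.sqrt_nonneg x)
  have h : ‖x‖ = ‖CFC.sqrt x‖ * ‖CFC.sqrt x‖ := by
    conv_lhs => rw [← CFC.sqrt_mul_sqrt_self x hx]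
    nth_rewrite 1 [← hs.star_eq]
    exact CStarRing.norm_star_mul_self
  rw [h, Real.sqrt_mul_self (norm_nonneg _)]

private lemma isUnit_cfc_sqrt (x : A) (hx : 0 ≤ x) (hu : IsUnit x) : IsUnit (CFC.sqrt x) := by
  obtain ⟨u, hux⟩ := hu
  have hsq : CFC.sqrt x * CFC.sqrt x = x := CFC.sqrt_mul_sqrt_self x hx
  have hcx : Commute (CFC.sqrt x) x := by
    have h := Commute.mul_right (Commute.refl (CFC.sqrt x)) (Commute.refl (CFC.sqrt x))
    rwa [hsq] at h
  have hc : Commute (CFC.sqrt x) (u : A) := by rw [hux]; exact hcx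
  have hc' : Commute (CFC.sqrt x) ((u⁻¹ : Aˣ) : A) := hc.units_inv_right
  refine isUnit_iff_exists.mpr ⟨CFC.sqrt x * ((u⁻¹ : Aˣ) : A), ?_, ?_⟩
  · rw [← mul_assoc, hsq, ← hux]
    exact u.mul_inv
  · rw [mul_assoc, ← hc'.eq, ← mul_assoc, hsq, ← hux]
    exact u.mul_inv

end CStarAux

private lemma real_key (r u v : ℝ) (hr : 0 < r) (hu0 : 0 ≤ u) (hv0 : 0 < v)
    (h : u ≤ v + r * Real.sqrt (u * v)) :
    u ≤ (r ^ 2 + 2 + r * Real.sqrt (r ^ 2 + 4)) / 2 * v := by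
  set x := Real.sqrt u with hx_def
  set w := Real.sqrt v with hw_def
  set s := Real.sqrt (r ^ 2 + 4) with hs_def
  have hx2 : x ^ 2 = u := Real.sq_sqrt hu0
  have hw2 : w ^ 2 = v := Real.sq_sqrt hv0.le
  have hs2 : s ^ 2 = r ^ 2 + 4 := Real.sq_sqrt (by positivity)
  have hx0 : 0 ≤ x := Real.sqrt_nonneg _
  have hw0 : 0 < w := Real.sqrt_pos.mpr hv0
  have hs0 : 0 ≤ s := Real.sqrt_nonneg _
  clear_value x w s
  have hsr : r < s := by nlinarith
  have hxw : Real.sqrt (u * v) = x * w := by rw [hx_def, hw_def]; exact Real.sqrt_mul hu0 v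
  rw [hxw] at h
  rw [← hx2, ← hw2] at h ⊢
  have h2x : 2 * x ≤ (r + s) * w := by
    by_contra hcon
    push_neg at hcon
    have h1 : 0 < 2 * x - (r + s) * w := by linarith
    have h2 : 0 < 2 * x - (r - s) * w := by nlinarith
    nlinarith [mul_pos h1 h2]
  nlinarith [mul_self_le_mul_self (by linarith : (0:ℝ) ≤ 2 * x) h2x]

/-- Norm bound on the noncommutative hyperbolic ball: every `a ∈ B⁺ₙ(c,r)` satisfies
`‖a‖ ≤ ‖Re c‖ + ‖Im c‖ ((r²+2+r√(r²+4))/2 + r √((r²+2+r√(r²+4))/2))`. -/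
theorem stmt_11 {A : Type*} [CStarAlgebra A] [PartialOrder A] [StarOrderedRing A]
    (c : A) (r : ℝ) (hr : 0 < r) (hc : 0 ≤ imPart c ∧ IsUnit (imPart c))
    (a : A) (ha : a ∈ ncUpperBall c r) :
    ‖a‖ ≤ ‖rePart c‖ + ‖imPart c‖ *
      ((r ^ 2 + 2 + r * Real.sqrt (r ^ 2 + 4)) / 2 +
        r * Real.sqrt ((r ^ 2 + 2 + r * Real.sqrt (r ^ 2 + 4)) / 2)) := by
  obtain ⟨⟨hIa0, hIaU⟩, hX⟩ := ha
  obtain ⟨hIc0, hIcU⟩ := hc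
  set u : ℝ := ‖imPart a‖ with hu_def
  set v : ℝ := ‖imPart c‖ with hv_def
  set K : ℝ := (r ^ 2 + 2 + r * Real.sqrt (r ^ 2 + 4)) / 2 with hK_def
  have hK0 : 0 ≤ K := by positivity
  by_cases hv : v = 0
  · -- degenerate case: then `imPart c = 0` is a unit, so `A` is trivial.
    have h0 : imPart c = 0 := norm_eq_zero.mp hv
    rw [h0] at hIcU
    have h01 : (0 : A) = 1 := isUnit_zero_iff.mp hIcU
    have : Subsingleton A := subsingleton_of_zero_eq_one h01
    have haz : a = 0 := Subsingleton.elim _ _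
    rw [haz, norm_zero]
    positivity
  · have hv0 : 0 < v := lt_of_le_of_ne (norm_nonneg _) (Ne.symm hv)
    have hu0 : 0 ≤ u := norm_nonneg _
    -- step 1: ‖a - c‖ ≤ r * √(u*v)
    have hUa : IsUnit (CFC.sqrt (imPart a)) := isUnit_cfc_sqrt _ hIa0 hIaU
    have hUc : IsUnit (CFC.sqrt (imPart c)) := isUnit_cfc_sqrt _ hIc0 hIcU
    have hdec : a - c = CFC.sqrt (imPart a) *
        (Ring.inverse (CFC.sqrt (imPart a)) * (a - c) * Ring.inverse (CFC.sqrt (imPart c))) *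
        CFC.sqrt (imPart c) := by
      have h1 : CFC.sqrt (imPart a) * Ring.inverse (CFC.sqrt (imPart a)) = 1 :=
        Ring.mul_inverse_cancel _ hUa
      have h2 : Ring.inverse (CFC.sqrt (imPart c)) * CFC.sqrt (imPart c) = 1 :=
        Ring.inverse_mul_cancel _ hUc
      calc a - c = (CFC.sqrt (imPart a) * Ring.inverse (CFC.sqrt (imPart a))) * (a - c) *
            (Ring.inverse (CFC.sqrt (imPart c)) * CFC.sqrt (imPart c)) := by
              rw [h1, h2, one_mul, mul_one]
        _ = _ := by simp only [mul_assoc]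
    have hnorm_sa : ‖CFC.sqrt (imPart a)‖ = Real.sqrt u := norm_cfc_sqrt _ hIa0
    have hnorm_sc : ‖CFC.sqrt (imPart c)‖ = Real.sqrt v := norm_cfc_sqrt _ hIc0
    have hac : ‖a - c‖ ≤ r * Real.sqrt (u * v) := by
      calc ‖a - c‖ = ‖CFC.sqrt (imPart a) *
            (Ring.inverse (CFC.sqrt (imPart a)) * (a - c) * Ring.inverse (CFC.sqrt (imPart c))) *
            CFC.sqrt (imPart c)‖ := by rw [← hdec]
        _ ≤ ‖CFC.sqrt (imPart a) *
            (Ring.inverse (CFC.sqrt (imPart a)) * (a - c) * Ring.inverse (CFC.sqrt (imPart c)))‖ *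
            ‖CFC.sqrt (imPart c)‖ := norm_mul_le _ _
        _ ≤ (‖CFC.sqrt (imPart a)‖ *
            ‖Ring.inverse (CFC.sqrt (imPart a)) * (a - c) * Ring.inverse (CFC.sqrt (imPart c))‖) *
            ‖CFC.sqrt (imPart c)‖ := by
              gcongr
              exact norm_mul_le _ _
        _ ≤ (Real.sqrt u * r) * Real.sqrt v := by
              rw [hnorm_sa, hnorm_sc]
              gcongr
        _ = r * Real.sqrt (u * v) := by
              rw [Real.sqrt_mul hu0]
              ring
    -- step 2: u ≤ v + r √(uv)
    have hu_le : u ≤ v + r * Real.sqrt (u * v) := by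
      have h1 : imPart a = imPart c + imPart (a - c) := by
        rw [imPart_sub']; abel
      calc u = ‖imPart c + imPart (a - c)‖ := by rw [hu_def, ← h1]
        _ ≤ v + ‖imPart (a - c)‖ := norm_add_le _ _
        _ ≤ v + ‖a - c‖ := by gcongr; exact norm_imPart_le' _
        _ ≤ v + r * Real.sqrt (u * v) := by linarith
    -- step 3: u ≤ K * v
    have hKv : u ≤ K * v := real_key r u v hr hu0 hv0 hu_le
    -- step 4: √(uv) ≤ √K * v
    have hsquv : Real.sqrt (u * v) ≤ Real.sqrt K * v := by
      have h1 : u * v ≤ K * (v * v) := by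
        have := mul_le_mul_of_nonneg_right hKv hv0.le
        linarith [this, mul_assoc K v v]
      calc Real.sqrt (u * v) ≤ Real.sqrt (K * (v * v)) := Real.sqrt_le_sqrt h1
        _ = Real.sqrt K * v := by
            rw [Real.sqrt_mul hK0, Real.sqrt_mul_self hv0.le]
    -- final assembly
    have hre : ‖rePart a‖ ≤ ‖rePart c‖ + ‖a - c‖ := by
      have h1 : rePart a = rePart c + rePart (a - c) := by rw [rePart_sub']; abel
      calc ‖rePart a‖ = ‖rePart c + rePart (a - c)‖ := by rw [h1]
        _ ≤ ‖rePart c‖ + ‖rePart (a - c)‖ := norm_add_le _ _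
        _ ≤ ‖rePart c‖ + ‖a - c‖ := by gcongr; exact norm_rePart_le' _
    have hfin : ‖a‖ ≤ ‖rePart a‖ + u := norm_le_rePart_add_imPart a
    have h5 : r * Real.sqrt (u * v) ≤ r * (Real.sqrt K * v) :=
      mul_le_mul_of_nonneg_left hsquv hr.le
    have hring : v * (K + r * Real.sqrt K) = K * v + r * (Real.sqrt K * v) := by ring
    calc ‖a‖ ≤ ‖rePart a‖ + u := hfin
      _ ≤ (‖rePart c‖ + ‖a - c‖) + u := by linarith
      _ ≤ ‖rePart c‖ + r * Real.sqrt (u * v) + u := by linarith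
      _ ≤ ‖rePart c‖ + r * (Real.sqrt K * v) + K * v := by linarith
      _ = ‖rePart c‖ + v * (K + r * Real.sqrt K) := by linarith
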